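/- Let a<b, T>0 be real numbers and λ∈ℂ. Let ρ₀,σ₀,σ̇:[a,b]→ℝ be continuous with ρ₀(x)>0 for all x. Let u₀,v₀,u̇,v̇:ℝ²→ℂ be smooth functions such that: (1) ρ₀(x)∂ₜ²w+σ₀(x)∂ₜw−∂ₓ²w=0 on [0,2T]×[a,b] for w=u₀ and for w=v₀; (2) ρ₀(x)∂ₜ²u̇+σ₀(x)∂ₜu̇−∂ₓ²u̇=−σ̇(x)∂ₜu₀ and ρ₀(x)∂ₜ²v̇+σ₀(x)∂ₜv̇−∂ₓ²v̇=−σ̇(x)∂ₜv₀ on [0,2T]×[a,b]; (3) w(0,x)=∂ₜw(0,x)=0 for all x∈[a,b] and each w∈{u₀,v₀,u̇,v̇}; (4) ∂ₓu̇(t,a)=∂ₓu̇(t,b)=∂ₓv̇(t,a)=∂ₓv̇(t,b)=0 for all t∈[0,2T]; (5) for all x∈[a,b] and each w∈{u₀,v₀}: ∂ₓ²w(T,x)+(λρ₀(x)−σ₀(x))∂ₜw(T,x)=0 and ∂ₓ∂ₜw(T,x)+λ∂ₓw(T,x)=0. Define the Neumann boundary traces f(t,b)=∂ₓu₀(t,b),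 f(t,a)=−∂ₓu₀(t,a), h(t,b)=∂ₓv₀(t,b), h(t,a)=−∂ₓv₀(t,a). Then ∫ₐᵇ σ̇(x)·∂ₜu₀(T,x)·∂ₜv₀(T,x)dx = −Σ_{x₀∈{a,b}} f(T,x₀)·∂ₜv̇(T,x₀) − ∫₀ᵀ Σ_{x₀∈{a,b}} f(t,x₀)·∂ₜ²v̇(2T−t,x₀)dt + ∫₀ᵀ Σ_{x₀∈{a,b}} ∂ₜu̇(t,x₀)·(∂ₜh)(2T−t,x₀)dt − λ·∫₀ᵀ Σ_{x₀∈{a,b}} f(t,x₀)·∂ₜv̇(2T−t,x₀)dt + λ·∫₀ᵀ Σ_{x₀∈{a,b}} ∂ₜu̇(t,x₀)·h(2T−t,x₀)dt, where (∂ₜh)(s,x₀) denotes the derivative of t↦h(t,x₀) evaluated at s. -/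

import Mathlib

open MeasureTheory intervalIntegral

/-- Partial derivative in the first (time) variable. -/
noncomputable def dt (f : ℝ → ℝ → ℂ) (t x : ℝ) : ℂ := deriv (fun τ => f τ x) t

/-- Partial derivative in the second (space) variable. -/
noncomputable def dx (f : ℝ → ℝ → ℂ) (t x : ℝ) : ℂ := deriv (fun y => f t y) x

/-- Second partial derivative in time. -/
noncomputable def dtt (f : ℝ → ℝ → ℂ) (t x : ℝ) : ℂ := deriv (fun τ => dt f τ x) t

/-- Second partial derivative in space. -/
noncomputable def dxx (f : ℝ → ℝ → ℂ) (t x : ℝ) : ℂ := deriv (fun y => dx f t y) x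

/-- Mixed partial derivative: first in time, then in space. -/
noncomputable def dxdt (f : ℝ → ℝ → ℂ) (t x : ℝ) : ℂ := deriv (fun y => dt f t y) x


section infra

variable {F : ℝ → ℝ → ℂ}

lemma curveT (t x : ℝ) : HasDerivAt (fun τ : ℝ => ((τ, x) : ℝ × ℝ)) (1, 0) t :=
  (hasDerivAt_id t).prodMk (hasDerivAt_const t x)

lemma curveX (t x : ℝ) : HasDerivAt (fun y : ℝ => ((t, y) : ℝ × ℝ)) (0, 1) x :=
  (hasDerivAt_const x t).prodMk (hasDerivAt_id x)

lemma hasDerivAt_slice_t (hF : ContDiff ℝ (⊤ : ℕ∞) (fun p : ℝ × ℝ => F p.1 p.2)) (t x : ℝ) :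
    HasDerivAt (fun τ => F τ x) (dt F t x) t := by
  have h1 : HasDerivAt (fun τ => F τ x)
      (fderiv ℝ (fun p : ℝ × ℝ => F p.1 p.2) (t, x) (1, 0)) t :=
    by have := ((hF.differentiable (by simp) (t, x)).hasFDerivAt).comp_hasDerivAt t (curveT t x)
       exact this
  unfold dt; rw [h1.deriv]; exact h1

lemma hasDerivAt_slice_x (hF : ContDiff ℝ (⊤ : ℕ∞) (fun p : ℝ × ℝ => F p.1 p.2)) (t x : ℝ) :
    HasDerivAt (fun y => F t y) (dx F t x) x := by
  have h1 : HasDerivAt (fun y => F t y)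
      (fderiv ℝ (fun p : ℝ × ℝ => F p.1 p.2) (t, x) (0, 1)) x :=
    ((hF.differentiable (by simp) (t, x)).hasFDerivAt).comp_hasDerivAt x (curveX t x)
  unfold dx; rw [h1.deriv]; exact h1

lemma dt_eq_fderiv (hF : ContDiff ℝ (⊤ : ℕ∞) (fun p : ℝ × ℝ => F p.1 p.2)) (t x : ℝ) :
    dt F t x = fderiv ℝ (fun p : ℝ × ℝ => F p.1 p.2) (t, x) (1, 0) := by
  have h1 : HasDerivAt (fun τ => F τ x)
      (fderiv ℝ (fun p : ℝ × ℝ => F p.1 p.2) (t, x) (1, 0)) t :=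
    by have := ((hF.differentiable (by simp) (t, x)).hasFDerivAt).comp_hasDerivAt t (curveT t x)
       exact this
  unfold dt; exact h1.deriv

lemma dx_eq_fderiv (hF : ContDiff ℝ (⊤ : ℕ∞) (fun p : ℝ × ℝ => F p.1 p.2)) (t x : ℝ) :
    dx F t x = fderiv ℝ (fun p : ℝ × ℝ => F p.1 p.2) (t, x) (0, 1) := by
  have h1 : HasDerivAt (fun y => F t y)
      (fderiv ℝ (fun p : ℝ × ℝ => F p.1 p.2) (t, x) (0, 1)) x :=
    ((hF.differentiable (by simp) (t, x)).hasFDerivAt).comp_hasDerivAt x (curveX t x)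
  unfold dx; exact h1.deriv

lemma contDiff_fderiv (hF : ContDiff ℝ (⊤ : ℕ∞) (fun p : ℝ × ℝ => F p.1 p.2)) :
    ContDiff ℝ (⊤ : ℕ∞) (fderiv ℝ (fun p : ℝ × ℝ => F p.1 p.2)) :=
  hF.fderiv_right (by simp)

lemma contDiff_dt (hF : ContDiff ℝ (⊤ : ℕ∞) (fun p : ℝ × ℝ => F p.1 p.2)) :
    ContDiff ℝ (⊤ : ℕ∞) (fun p : ℝ × ℝ => dt F p.1 p.2) := by
  have h : (fun p : ℝ × ℝ => dt F p.1 p.2)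
      = fun p : ℝ × ℝ => fderiv ℝ (fun p : ℝ × ℝ => F p.1 p.2) p (1, 0) := by
    funext p; exact dt_eq_fderiv hF p.1 p.2
  rw [h]
  exact (contDiff_fderiv hF).clm_apply contDiff_const

lemma contDiff_dx (hF : ContDiff ℝ (⊤ : ℕ∞) (fun p : ℝ × ℝ => F p.1 p.2)) :
    ContDiff ℝ (⊤ : ℕ∞) (fun p : ℝ × ℝ => dx F p.1 p.2) := by
  have h : (fun p : ℝ × ℝ => dx F p.1 p.2)
      = fun p : ℝ × ℝ => fderiv ℝ (fun p : ℝ × ℝ => F p.1 p.2) p (0, 1) := by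
    funext p; exact dx_eq_fderiv hF p.1 p.2
  rw [h]
  exact (contDiff_fderiv hF).clm_apply contDiff_const

/-- Clairaut: the `t`-derivative of `dx F` is `dxdt F`. -/
lemma hasDerivAt_dx_t (hF : ContDiff ℝ (⊤ : ℕ∞) (fun p : ℝ × ℝ => F p.1 p.2)) (t x : ℝ) :
    HasDerivAt (fun τ => dx F τ x) (dxdt F t x) t := by
  set Fc : ℝ × ℝ → ℂ := fun p => F p.1 p.2 with hFc
  have hdF := contDiff_fderiv hF
  have hcurve : HasDerivAt (fun τ : ℝ => fderiv ℝ Fc (τ, x))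
      (fderiv ℝ (fderiv ℝ Fc) (t, x) (1, 0)) t :=
    ((hdF.differentiable (by simp) (t, x)).hasFDerivAt).comp_hasDerivAt t (curveT t x)
  have h1 : HasDerivAt (fun τ : ℝ => fderiv ℝ Fc (τ, x) (0, 1))
      (fderiv ℝ (fderiv ℝ Fc) (t, x) (1, 0) (0, 1)) t := by
    have := hcurve.clm_apply (hasDerivAt_const t ((0 : ℝ), (1 : ℝ)))
    simpa using this
  have heq : (fun τ : ℝ => dx F τ x) = fun τ : ℝ => fderiv ℝ Fc (τ, x) (0, 1) := by
    funext τ; exact dx_eq_fderiv hF τ x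
  have hsymm : fderiv ℝ (fderiv ℝ Fc) (t, x) (1, 0) (0, 1)
      = fderiv ℝ (fderiv ℝ Fc) (t, x) (0, 1) (1, 0) := by
    refine second_derivative_symmetric (f := Fc) (f' := fderiv ℝ Fc)
      (fun y => (hF.differentiable (by simp) y).hasFDerivAt)
      ((hdF.differentiable (by simp) (t, x)).hasFDerivAt) _ _
  have h2 : dxdt F t x = fderiv ℝ (fderiv ℝ Fc) (t, x) (0, 1) (1, 0) := by
    have hc2 : HasDerivAt (fun y : ℝ => fderiv ℝ Fc (t, y))
        (fderiv ℝ (fderiv ℝ Fc) (t, x) (0, 1)) x :=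
      ((hdF.differentiable (by simp) (t, x)).hasFDerivAt).comp_hasDerivAt x (curveX t x)
    have h3 : HasDerivAt (fun y : ℝ => fderiv ℝ Fc (t, y) (1, 0))
        (fderiv ℝ (fderiv ℝ Fc) (t, x) (0, 1) (1, 0)) x := by
      have := hc2.clm_apply (hasDerivAt_const x ((1 : ℝ), (0 : ℝ)))
      simpa using this
    have heq2 : (fun y : ℝ => dt F t y) = fun y : ℝ => fderiv ℝ Fc (t, y) (1, 0) := by
      funext y; exact dt_eq_fderiv hF t y
    show deriv (fun y => dt F t y) x = _
    rw [heq2]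
    exact h3.deriv
  rw [heq, h2, ← hsymm]
  exact h1

lemma continuous_slice_x {G : ℝ → ℝ → ℂ} (hG : Continuous (fun p : ℝ × ℝ => G p.1 p.2))
    (t : ℝ) : Continuous (fun x => G t x) :=
  hG.comp (continuous_const.prodMk continuous_id)

lemma continuous_slice_t {G : ℝ → ℝ → ℂ} (hG : Continuous (fun p : ℝ × ℝ => G p.1 p.2))
    (x : ℝ) : Continuous (fun t => G t x) :=
  hG.comp (continuous_id.prodMk continuous_const)

end infra

section tools

/-- a.e. congruence of interval integrals from equality on the open interval. -/
lemma integral_congr_Ioo {a b : ℝ} (hab : a ≤ b) {f g : ℝ → ℂ}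
    (h : ∀ x ∈ Set.Ioo a b, f x = g x) :
    ∫ x in a..b, f x = ∫ x in a..b, g x := by
  apply intervalIntegral.integral_congr_ae
  have hb : (MeasureTheory.volume : MeasureTheory.Measure ℝ) {b} = 0 :=
    MeasureTheory.measure_singleton b
  filter_upwards [MeasureTheory.compl_mem_ae_iff.mpr hb] with x hx hx2
  rw [Set.uIoc_of_le hab] at hx2
  exact h x ⟨hx2.1, lt_of_le_of_ne hx2.2 (by simpa using hx)⟩

/-- Differentiation under the interval integral sign, with a continuous-on weight. -/
lemma key_deriv {a b : ℝ} (hab : a ≤ b) (w : ℝ → ℂ) (hw : ContinuousOn w (Set.Icc a b))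
    (G G' : ℝ → ℝ → ℂ) (hG : Continuous (fun p : ℝ × ℝ => G p.1 p.2))
    (hG' : Continuous (fun p : ℝ × ℝ => G' p.1 p.2))
    (hd : ∀ t x, HasDerivAt (fun τ => G τ x) (G' t x) t) (t₀ : ℝ) :
    HasDerivAt (fun t => ∫ x in a..b, w x * G t x) (∫ x in a..b, w x * G' t₀ x) t₀ := by
  have hIoc : Set.uIoc a b ⊆ Set.Icc a b := by
    rw [Set.uIoc_of_le hab]; exact Set.Ioc_subset_Icc_self
  have hwm : AEStronglyMeasurable w (MeasureTheory.volume.restrict (Set.uIoc a b)) :=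
    (hw.mono hIoc).aestronglyMeasurable measurableSet_uIoc
  -- bound for w
  obtain ⟨Cw, hCw⟩ : ∃ C, ∀ x ∈ Set.Icc a b, ‖w x‖ ≤ C :=
    isCompact_Icc.exists_bound_of_continuousOn hw
  -- bound for G' on a compact neighborhood
  obtain ⟨M, hM⟩ : ∃ M, ∀ p ∈ Set.Icc (t₀ - 1) (t₀ + 1) ×ˢ Set.Icc a b,
      ‖(fun p : ℝ × ℝ => G' p.1 p.2) p‖ ≤ M :=
    (isCompact_Icc.prod isCompact_Icc).exists_bound_of_continuousOn hG'.continuousOn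
  have h := intervalIntegral.hasDerivAt_integral_of_dominated_loc_of_deriv_le
    (F := fun t x => w x * G t x) (F' := fun t x => w x * G' t x)
    (bound := fun _ => Cw * M) (a := a) (b := b) (μ := MeasureTheory.volume)
    (Metric.ball_mem_nhds t₀ one_pos)
    (Filter.Eventually.of_forall (fun t =>
      hwm.mul ((continuous_slice_x hG t).aestronglyMeasurable.restrict)))
    (((hw.mul (continuous_slice_x hG t₀).continuousOn).mono
      (by rw [Set.uIcc_of_le hab])).intervalIntegrable)
    (hwm.mul ((continuous_slice_x hG' t₀).aestronglyMeasurable.restrict))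
    ?_ (intervalIntegrable_const) ?_
  · exact h.2
  · apply Filter.Eventually.of_forall
    intro x hx t ht
    have hx' : x ∈ Set.Icc a b := hIoc hx
    have ht' : t ∈ Set.Icc (t₀ - 1) (t₀ + 1) := by
      have := Metric.mem_ball.mp ht
      rw [Real.dist_eq] at this
      constructor <;> [linarith [abs_lt.mp this]; linarith [abs_lt.mp this]]
    calc ‖w x * G' t x‖ = ‖w x‖ * ‖G' t x‖ := norm_mul _ _
      _ ≤ Cw * M := by
          have h1 := hCw x hx'
          have h2 := hM (t, x) ⟨ht', hx'⟩
          exact mul_le_mul h1 h2 (norm_nonneg _) ((norm_nonneg _).trans h1)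
  · exact Filter.Eventually.of_forall (fun x _ t _ => (hd t x).const_mul (w x))

/-- Integration by parts, first form: `∫ u' v = u b v b - u a v a - ∫ u v'`. -/
lemma my_ibp {a b : ℝ} (u v u' v' : ℝ → ℂ)
    (hu : ∀ x, HasDerivAt u (u' x) x) (hv : ∀ x, HasDerivAt v (v' x) x)
    (hu' : Continuous u') (hv' : Continuous v') :
    ∫ x in a..b, u' x * v x = u b * v b - u a * v a - ∫ x in a..b, u x * v' x := by
  have hucont : Continuous u := by
    rw [continuous_iff_continuousAt]; exact fun x => (hu x).differentiableAt.continuousAt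
  have hvcont : Continuous v := by
    rw [continuous_iff_continuousAt]; exact fun x => (hv x).differentiableAt.continuousAt
  have h := intervalIntegral.integral_deriv_mul_eq_sub (a := a) (b := b)
    (fun x _ => hu x) (fun x _ => hv x)
    (hu'.intervalIntegrable a b) (hv'.intervalIntegrable a b)
  have hsplit : ∫ x in a..b, (u' x * v x + u x * v' x)
      = (∫ x in a..b, u' x * v x) + ∫ x in a..b, u x * v' x :=
    intervalIntegral.integral_add ((hu'.mul hvcont).intervalIntegrable _ _)
      ((hucont.mul hv').intervalIntegrable _ _)
  rw [hsplit] at h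
  linear_combination h

/-- Integration by parts, second form: `∫ u v' = u b v b - u a v a - ∫ u' v`. -/
lemma my_ibp' {a b : ℝ} (u v u' v' : ℝ → ℂ)
    (hu : ∀ x, HasDerivAt u (u' x) x) (hv : ∀ x, HasDerivAt v (v' x) x)
    (hu' : Continuous u') (hv' : Continuous v') :
    ∫ x in a..b, u x * v' x = u b * v b - u a * v a - ∫ x in a..b, u' x * v x := by
  have h := my_ibp (a := a) (b := b) u v u' v' hu hv hu' hv'
  linear_combination h

end tools

/-- Differentiation under the integral sign without weight. -/
lemma key_deriv1 {a b : ℝ} (hab : a ≤ b)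
    (G G' : ℝ → ℝ → ℂ) (hG : Continuous (fun p : ℝ × ℝ => G p.1 p.2))
    (hG' : Continuous (fun p : ℝ × ℝ => G' p.1 p.2))
    (hd : ∀ t x, HasDerivAt (fun τ => G τ x) (G' t x) t) (t₀ : ℝ) :
    HasDerivAt (fun t => ∫ x in a..b, G t x) (∫ x in a..b, G' t₀ x) t₀ := by
  have := key_deriv hab (fun _ => (1 : ℂ)) continuousOn_const G G' hG hG' hd t₀
  simpa using this

section main

lemma blago_main (a b T : ℝ) (hab : a < b) (hT : 0 < T)
    (ρ₀ σ₀ σd : ℝ → ℝ)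
    (hρ : ContinuousOn ρ₀ (Set.Icc a b))
    (A A' B B' C C' D D' : ℝ → ℝ → ℂ)
    (hA : ContDiff ℝ (⊤ : ℕ∞) (fun p : ℝ × ℝ => A p.1 p.2))
    (hA' : ContDiff ℝ (⊤ : ℕ∞) (fun p : ℝ × ℝ => A' p.1 p.2))
    (hB : ContDiff ℝ (⊤ : ℕ∞) (fun p : ℝ × ℝ => B p.1 p.2))
    (hB' : ContDiff ℝ (⊤ : ℕ∞) (fun p : ℝ × ℝ => B' p.1 p.2))
    (hC : ContDiff ℝ (⊤ : ℕ∞) (fun p : ℝ × ℝ => C p.1 p.2))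
    (hC' : ContDiff ℝ (⊤ : ℕ∞) (fun p : ℝ × ℝ => C' p.1 p.2))
    (hD : ContDiff ℝ (⊤ : ℕ∞) (fun p : ℝ × ℝ => D p.1 p.2))
    (hD' : ContDiff ℝ (⊤ : ℕ∞) (fun p : ℝ × ℝ => D' p.1 p.2))
    (cA : ∀ t x, dt A' t x = dx A t x)
    (cB : ∀ t x, dt B' t x = dx B t x)
    (cC : ∀ t x, dt C' t x = dx C t x)
    (cD : ∀ t x, dt D' t x = dx D t x)
    (pdeA : ∀ t ∈ Set.Ioo (0:ℝ) T, ∀ x ∈ Set.Ioo a b,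
      (ρ₀ x : ℂ) * dt A t x = dx A' t x - σ₀ x * A t x)
    (pdeB : ∀ t ∈ Set.Ioo (0:ℝ) T, ∀ x ∈ Set.Ioo a b,
      (ρ₀ x : ℂ) * dt B t x = dx B' t x - σ₀ x * B t x - σd x * A t x)
    (pdeC : ∀ s ∈ Set.Ioo T (2*T), ∀ x ∈ Set.Ioo a b,
      (ρ₀ x : ℂ) * dt C s x = dx C' s x - σ₀ x * C s x)
    (pdeD : ∀ s ∈ Set.Ioo T (2*T), ∀ x ∈ Set.Ioo a b,
      (ρ₀ x : ℂ) * dt D s x = dx D' s x - σ₀ x * D s x - σd x * C s x)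
    (hB'bd : ∀ t ∈ Set.Ioo (0:ℝ) T, B' t a = 0 ∧ B' t b = 0)
    (hD'bd : ∀ s ∈ Set.Ioo T (2*T), D' s a = 0 ∧ D' s b = 0)
    (init : ∀ x ∈ Set.Ioo a b, A 0 x = 0 ∧ B 0 x = 0 ∧ A' 0 x = 0 ∧ B' 0 x = 0) :
    ((∫ x in a..b, (ρ₀ x : ℂ) * (A T x * D T x + B T x * C T x))
      - ∫ x in a..b, (A' T x * D' T x + B' T x * C' T x))
    = ∫ t in (0:ℝ)..T,
        ((A' t b * D (2*T - t) b - A' t a * D (2*T - t) a)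
          - (B t b * C' (2*T - t) b - B t a * C' (2*T - t) a)) := by
  have hwρ : ContinuousOn (fun x => ((ρ₀ x : ℂ))) (Set.Icc a b) :=
    Complex.continuous_ofReal.comp_continuousOn hρ
  have contRefl : Continuous (fun p : ℝ × ℝ => ((2*T - p.1, p.2) : ℝ × ℝ)) :=
    (continuous_const.sub continuous_fst).prodMk continuous_snd
  have cc : ∀ {W : ℝ → ℝ → ℂ}, Continuous (fun p : ℝ × ℝ => W p.1 p.2) →
      Continuous (fun p : ℝ × ℝ => W (2*T - p.1) p.2) := fun hW => hW.comp contRefl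
  -- reflected time derivative
  have hrefl : ∀ (W : ℝ → ℝ → ℂ), ContDiff ℝ (⊤ : ℕ∞) (fun p : ℝ × ℝ => W p.1 p.2) →
      ∀ (t x : ℝ), HasDerivAt (fun τ => W (2*T - τ) x) (-(dt W (2*T - t) x)) t := by
    intro W hW t x
    have hi : HasDerivAt (fun τ : ℝ => 2*T - τ) (-1) t := by
      simpa using (hasDerivAt_id t).const_sub (2*T)
    have ho := hasDerivAt_slice_t hW (2*T - t) x
    have := ho.scomp t hi
    simpa [Function.comp_def] using this
  -- the two parts of φ
  set G₁ : ℝ → ℝ → ℂ := fun t x => A t x * D (2*T - t) x + B t x * C (2*T - t) x with hG₁def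
  set G₂ : ℝ → ℝ → ℂ := fun t x => A' t x * D' (2*T - t) x + B' t x * C' (2*T - t) x with hG₂def
  set G₁' : ℝ → ℝ → ℂ := fun t x =>
    dt A t x * D (2*T - t) x - A t x * dt D (2*T - t) x
      + (dt B t x * C (2*T - t) x - B t x * dt C (2*T - t) x) with hG₁'def
  set G₂' : ℝ → ℝ → ℂ := fun t x =>
    dt A' t x * D' (2*T - t) x - A' t x * dt D' (2*T - t) x
      + (dt B' t x * C' (2*T - t) x - B' t x * dt C' (2*T - t) x) with hG₂'def
  have hd₁ : ∀ t x, HasDerivAt (fun τ => G₁ τ x) (G₁' t x) t := by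
    intro t x
    have h1 := ((hasDerivAt_slice_t hA t x).mul (hrefl D hD t x))
    have h2 := ((hasDerivAt_slice_t hB t x).mul (hrefl C hC t x))
    have := h1.add h2
    simp only [hG₁def, hG₁'def]
    refine this.congr_deriv ?_
    ring
  have hd₂ : ∀ t x, HasDerivAt (fun τ => G₂ τ x) (G₂' t x) t := by
    intro t x
    have h1 := ((hasDerivAt_slice_t hA' t x).mul (hrefl D' hD' t x))
    have h2 := ((hasDerivAt_slice_t hB' t x).mul (hrefl C' hC' t x))
    have := h1.add h2
    simp only [hG₂def, hG₂'def]
    refine this.congr_deriv ?_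
    ring
  have hG₁c : Continuous (fun p : ℝ × ℝ => G₁ p.1 p.2) :=
    (hA.continuous.mul (cc hD.continuous)).add (hB.continuous.mul (cc hC.continuous))
  have hG₂c : Continuous (fun p : ℝ × ℝ => G₂ p.1 p.2) :=
    (hA'.continuous.mul (cc hD'.continuous)).add (hB'.continuous.mul (cc hC'.continuous))
  have hG₁'c : Continuous (fun p : ℝ × ℝ => G₁' p.1 p.2) :=
    (((contDiff_dt hA).continuous.mul (cc hD.continuous)).sub
      (hA.continuous.mul (cc (contDiff_dt hD).continuous))).add
    (((contDiff_dt hB).continuous.mul (cc hC.continuous)).sub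
      (hB.continuous.mul (cc (contDiff_dt hC).continuous)))
  have hG₂'c : Continuous (fun p : ℝ × ℝ => G₂' p.1 p.2) :=
    (((contDiff_dt hA').continuous.mul (cc hD'.continuous)).sub
      (hA'.continuous.mul (cc (contDiff_dt hD').continuous))).add
    (((contDiff_dt hB').continuous.mul (cc hC'.continuous)).sub
      (hB'.continuous.mul (cc (contDiff_dt hC').continuous)))
  set φ : ℝ → ℂ := fun t => (∫ x in a..b, (ρ₀ x : ℂ) * G₁ t x) - ∫ x in a..b, G₂ t x with hφdef
  have hφ : ∀ t₀, HasDerivAt φ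
      ((∫ x in a..b, (ρ₀ x : ℂ) * G₁' t₀ x) - ∫ x in a..b, G₂' t₀ x) t₀ := by
    intro t₀
    exact (key_deriv hab.le _ hwρ G₁ G₁' hG₁c hG₁'c hd₁ t₀).sub
      (key_deriv1 hab.le G₂ G₂' hG₂c hG₂'c hd₂ t₀)
  set Bd : ℝ → ℂ := fun t =>
    (A' t b * D (2*T - t) b - A' t a * D (2*T - t) a)
      - (B t b * C' (2*T - t) b - B t a * C' (2*T - t) a) with hBddef
  -- the computed value of the derivative on the open interval
  have key : ∀ t ∈ Set.Ioo (0:ℝ) T,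
      ((∫ x in a..b, (ρ₀ x : ℂ) * G₁' t x) - ∫ x in a..b, G₂' t x) = Bd t := by
    intro t ht
    have hs : (2*T - t) ∈ Set.Ioo T (2*T) := ⟨by cases ht; linarith, by cases ht; linarith⟩
    set s : ℝ := 2*T - t with hsdef
    -- rewrite first integral with the PDEs
    have C1 : (∫ x in a..b, (ρ₀ x : ℂ) * G₁' t x)
        = ∫ x in a..b, (dx A' t x * D s x - A t x * dx D' s x
            + (dx B' t x * C s x - B t x * dx C' s x)) := by
      apply integral_congr_Ioo hab.le
      intro x hx
      simp only [hG₁'def]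
      linear_combination (D s x) * (pdeA t ht x hx) - (A t x) * (pdeD s hs x hx)
        + (C s x) * (pdeB t ht x hx) - (B t x) * (pdeC s hs x hx)
    -- rewrite second integral with the compatibility relations
    have C2 : (∫ x in a..b, G₂' t x)
        = ∫ x in a..b, (dx A t x * D' s x - A' t x * dx D s x
            + (dx B t x * C' s x - B' t x * dx C s x)) := by
      apply integral_congr_Ioo hab.le
      intro x _
      simp only [hG₂'def, cA, cB, cC, cD]
      rfl
    rw [C1, C2]
    -- now integrate by parts: the difference is a sum of four exact derivatives
    have iP : ∀ (U V : ℝ → ℝ → ℂ), ContDiff ℝ (⊤ : ℕ∞) (fun p : ℝ × ℝ => U p.1 p.2) →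
        ContDiff ℝ (⊤ : ℕ∞) (fun p : ℝ × ℝ => V p.1 p.2) → ∀ (τ σ' : ℝ),
        ∫ x in a..b, (dx U τ x * V σ' x + U τ x * dx V σ' x)
          = U τ b * V σ' b - U τ a * V σ' a := by
      intro U V hU hV τ σ'
      exact intervalIntegral.integral_deriv_mul_eq_sub
        (fun x _ => hasDerivAt_slice_x hU τ x) (fun x _ => hasDerivAt_slice_x hV σ' x)
        ((continuous_slice_x (contDiff_dx hU).continuous τ).intervalIntegrable a b)
        ((continuous_slice_x (contDiff_dx hV).continuous σ').intervalIntegrable a b)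
    have i1 := iP A' D hA' hD t s
    have i2 := iP A D' hA hD' t s
    have i3 := iP B' C hB' hC t s
    have i4 := iP B C' hB hC' t s
    -- integrability of the four grouped integrands
    have int1 : IntervalIntegrable
        (fun x => dx A' t x * D s x + A' t x * dx D s x) MeasureTheory.volume a b :=
      (((continuous_slice_x (contDiff_dx hA').continuous t).mul
        (continuous_slice_x hD.continuous s)).add
        ((continuous_slice_x hA'.continuous t).mul
          (continuous_slice_x (contDiff_dx hD).continuous s))).intervalIntegrable a b
    have int2 : IntervalIntegrable
        (fun x => dx A t x * D' s x + A t x * dx D' s x) MeasureTheory.volume a b :=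
      (((continuous_slice_x (contDiff_dx hA).continuous t).mul
        (continuous_slice_x hD'.continuous s)).add
        ((continuous_slice_x hA.continuous t).mul
          (continuous_slice_x (contDiff_dx hD').continuous s))).intervalIntegrable a b
    have int3 : IntervalIntegrable
        (fun x => dx B' t x * C s x + B' t x * dx C s x) MeasureTheory.volume a b :=
      (((continuous_slice_x (contDiff_dx hB').continuous t).mul
        (continuous_slice_x hC.continuous s)).add
        ((continuous_slice_x hB'.continuous t).mul
          (continuous_slice_x (contDiff_dx hC).continuous s))).intervalIntegrable a b
    have int4 : IntervalIntegrable
        (fun x => dx B t x * C' s x + B t x * dx C' s x) MeasureTheory.volume a b :=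
      (((continuous_slice_x (contDiff_dx hB).continuous t).mul
        (continuous_slice_x hC'.continuous s)).add
        ((continuous_slice_x hB.continuous t).mul
          (continuous_slice_x (contDiff_dx hC').continuous s))).intervalIntegrable a b
    have split : (∫ x in a..b, (dx A' t x * D s x - A t x * dx D' s x
            + (dx B' t x * C s x - B t x * dx C' s x)))
        - (∫ x in a..b, (dx A t x * D' s x - A' t x * dx D s x
            + (dx B t x * C' s x - B' t x * dx C s x)))
        = (∫ x in a..b, (dx A' t x * D s x + A' t x * dx D s x))
          - (∫ x in a..b, (dx A t x * D' s x + A t x * dx D' s x))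
          + ((∫ x in a..b, (dx B' t x * C s x + B' t x * dx C s x))
            - ∫ x in a..b, (dx B t x * C' s x + B t x * dx C' s x)) := by
      rw [← intervalIntegral.integral_sub int1 int2, ← intervalIntegral.integral_sub int3 int4,
        ← intervalIntegral.integral_add (int1.sub int2) (int3.sub int4),
        ← intervalIntegral.integral_sub]
      · apply intervalIntegral.integral_congr
        intro x _
        ring
      · exact (((continuous_slice_x (contDiff_dx hA').continuous t).mul
          (continuous_slice_x hD.continuous s)).sub
          ((continuous_slice_x hA.continuous t).mul
            (continuous_slice_x (contDiff_dx hD').continuous s))).add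
          (((continuous_slice_x (contDiff_dx hB').continuous t).mul
            (continuous_slice_x hC.continuous s)).sub
            ((continuous_slice_x hB.continuous t).mul
              (continuous_slice_x (contDiff_dx hC').continuous s))) |>.intervalIntegrable a b
      · exact (((continuous_slice_x (contDiff_dx hA).continuous t).mul
          (continuous_slice_x hD'.continuous s)).sub
          ((continuous_slice_x hA'.continuous t).mul
            (continuous_slice_x (contDiff_dx hD).continuous s))).add
          (((continuous_slice_x (contDiff_dx hB).continuous t).mul
            (continuous_slice_x hC'.continuous s)).sub
            ((continuous_slice_x hB'.continuous t).mul
              (continuous_slice_x (contDiff_dx hC).continuous s))) |>.intervalIntegrable a b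
    rw [split, i1, i2, i3, i4, hBddef]
    have hD'a := (hD'bd s hs).1
    have hD'b := (hD'bd s hs).2
    have hB'a := (hB'bd t ht).1
    have hB'b := (hB'bd t ht).2
    rw [hD'a, hD'b, hB'a, hB'b]
    ring
  -- initial value
  have hφ0 : φ 0 = 0 := by
    have h1 : (∫ x in a..b, (ρ₀ x : ℂ) * G₁ 0 x) = ∫ x in a..b, (0:ℂ) := by
      apply integral_congr_Ioo hab.le
      intro x hx
      obtain ⟨e1, e2, _, _⟩ := init x hx
      simp only [hG₁def, e1, e2]
      ring
    have h2 : (∫ x in a..b, G₂ 0 x) = ∫ x in a..b, (0:ℂ) := by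
      apply integral_congr_Ioo hab.le
      intro x hx
      obtain ⟨_, _, e3, e4⟩ := init x hx
      simp only [hG₂def, e3, e4]
      ring
    simp only [hφdef, h1, h2, intervalIntegral.integral_zero, sub_zero]
  -- FTC along the characteristic
  have hBdcont : Continuous Bd := by
    have hsl : ∀ (W : ℝ → ℝ → ℂ), Continuous (fun p : ℝ × ℝ => W p.1 p.2) → ∀ (x₀ : ℝ),
        Continuous (fun t => W (2*T - t) x₀) := by
      intro W hW x₀
      exact (continuous_slice_t hW x₀).comp (continuous_const.sub continuous_id)
    exact (((continuous_slice_t hA'.continuous b).mul (hsl D hD.continuous b)).sub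
      ((continuous_slice_t hA'.continuous a).mul (hsl D hD.continuous a))).sub
      (((continuous_slice_t hB.continuous b).mul (hsl C' hC'.continuous b)).sub
        ((continuous_slice_t hB.continuous a).mul (hsl C' hC'.continuous a)))
  have hFTC : ∫ t in (0:ℝ)..T, Bd t = φ T - φ 0 := by
    apply intervalIntegral.integral_eq_sub_of_hasDerivAt_of_le hT.le
    · intro t _
      exact ((hφ t).continuousAt).continuousWithinAt
    · intro t ht
      exact key t ht ▸ hφ t
    · exact hBdcont.intervalIntegrable 0 T
  have h2T : 2*T - T = T := by ring
  have hφT : φ T = ((∫ x in a..b, (ρ₀ x : ℂ) * (A T x * D T x + B T x * C T x))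
      - ∫ x in a..b, (A' T x * D' T x + B' T x * C' T x)) := by
    simp only [hφdef, hG₁def, hG₂def, h2T]
  rw [hφ0, sub_zero, hφT] at hFTC
  exact hFTC.symm

end main

/-- auxiliary facts about eventually-vanishing functions -/
lemma deriv_zero_of_eventually {g : ℝ → ℂ} {d : ℂ} {s : ℝ} (hg : HasDerivAt g d s)
    (h0 : g =ᶠ[nhds s] fun _ => (0:ℂ)) : d = 0 :=
  (hg.congr_of_eventuallyEq h0.symm).unique (hasDerivAt_const s 0)

/-- One-dimensional linearized Blagoveščenskiĭ identity with a free complex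
parameter `lam` for the damped wave equation. -/
theorem stmt3 (a b T : ℝ) (hab : a < b) (hT : 0 < T) (lam : ℂ)
    (ρ₀ σ₀ σd : ℝ → ℝ)
    (hρ₀ : ContinuousOn ρ₀ (Set.Icc a b)) (hσ₀ : ContinuousOn σ₀ (Set.Icc a b))
    (hσd : ContinuousOn σd (Set.Icc a b))
    (hρ₀pos : ∀ x ∈ Set.Icc a b, 0 < ρ₀ x)
    (u₀ v₀ ud vd : ℝ → ℝ → ℂ)
    (hu₀ : ContDiff ℝ (⊤ : ℕ∞) (fun p : ℝ × ℝ => u₀ p.1 p.2))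
    (hv₀ : ContDiff ℝ (⊤ : ℕ∞) (fun p : ℝ × ℝ => v₀ p.1 p.2))
    (hud : ContDiff ℝ (⊤ : ℕ∞) (fun p : ℝ × ℝ => ud p.1 p.2))
    (hvd : ContDiff ℝ (⊤ : ℕ∞) (fun p : ℝ × ℝ => vd p.1 p.2))
    -- (1) background wave equations
    (hu₀eq : ∀ t ∈ Set.Icc (0 : ℝ) (2 * T), ∀ x ∈ Set.Icc a b,
      (ρ₀ x : ℂ) * dtt u₀ t x + (σ₀ x : ℂ) * dt u₀ t x - dxx u₀ t x = 0)
    (hv₀eq : ∀ t ∈ Set.Icc (0 : ℝ) (2 * T), ∀ x ∈ Set.Icc a b,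
      (ρ₀ x : ℂ) * dtt v₀ t x + (σ₀ x : ℂ) * dt v₀ t x - dxx v₀ t x = 0)
    -- (2) linearized wave equations with source
    (hudeq : ∀ t ∈ Set.Icc (0 : ℝ) (2 * T), ∀ x ∈ Set.Icc a b,
      (ρ₀ x : ℂ) * dtt ud t x + (σ₀ x : ℂ) * dt ud t x - dxx ud t x
        = -(σd x : ℂ) * dt u₀ t x)
    (hvdeq : ∀ t ∈ Set.Icc (0 : ℝ) (2 * T), ∀ x ∈ Set.Icc a b,
      (ρ₀ x : ℂ) * dtt vd t x + (σ₀ x : ℂ) * dt vd t x - dxx vd t x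
        = -(σd x : ℂ) * dt v₀ t x)
    -- (3) vanishing initial conditions
    (hu₀0 : ∀ x ∈ Set.Icc a b, u₀ 0 x = 0 ∧ dt u₀ 0 x = 0)
    (hv₀0 : ∀ x ∈ Set.Icc a b, v₀ 0 x = 0 ∧ dt v₀ 0 x = 0)
    (hud0 : ∀ x ∈ Set.Icc a b, ud 0 x = 0 ∧ dt ud 0 x = 0)
    (hvd0 : ∀ x ∈ Set.Icc a b, vd 0 x = 0 ∧ dt vd 0 x = 0)
    -- (4) vanishing Neumann data for the perturbed fields
    (hudN : ∀ t ∈ Set.Icc (0 : ℝ) (2 * T), dx ud t a = 0 ∧ dx ud t b = 0)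
    (hvdN : ∀ t ∈ Set.Icc (0 : ℝ) (2 * T), dx vd t a = 0 ∧ dx vd t b = 0)
    -- (5) the final states of the background fields lie in the kernel of the
    -- λ-shifted stationary operator
    (hu₀fin : ∀ x ∈ Set.Icc a b,
      dxx u₀ T x + (lam * (ρ₀ x : ℂ) - (σ₀ x : ℂ)) * dt u₀ T x = 0 ∧
      dxdt u₀ T x + lam * dx u₀ T x = 0)
    (hv₀fin : ∀ x ∈ Set.Icc a b,
      dxx v₀ T x + (lam * (ρ₀ x : ℂ) - (σ₀ x : ℂ)) * dt v₀ T x = 0 ∧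
      dxdt v₀ T x + lam * dx v₀ T x = 0)
    -- Neumann boundary traces of the background fields
    (f h : ℝ → ℝ → ℂ)
    (hfb : ∀ t, f t b = dx u₀ t b) (hfa : ∀ t, f t a = -dx u₀ t a)
    (hhb : ∀ t, h t b = dx v₀ t b) (hha : ∀ t, h t a = -dx v₀ t a) :
    ∫ x in a..b, (σd x : ℂ) * dt u₀ T x * dt v₀ T x
      = -(f T a * dt vd T a + f T b * dt vd T b)
        - (∫ t in (0 : ℝ)..T,
            (f t a * dtt vd (2 * T - t) a + f t b * dtt vd (2 * T - t) b))
        + (∫ t in (0 : ℝ)..T,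
            (dt ud t a * deriv (fun s => h s a) (2 * T - t)
              + dt ud t b * deriv (fun s => h s b) (2 * T - t)))
        - lam * (∫ t in (0 : ℝ)..T,
            (f t a * dt vd (2 * T - t) a + f t b * dt vd (2 * T - t) b))
        + lam * (∫ t in (0 : ℝ)..T,
            (dt ud t a * h (2 * T - t) a + dt ud t b * h (2 * T - t) b)) := by
  have hIooT : ∀ t ∈ Set.Ioo (0:ℝ) T, t ∈ Set.Icc (0:ℝ) (2*T) := by
    intro t ht; exact ⟨ht.1.le, by cases ht; linarith⟩
  have hIooS : ∀ s ∈ Set.Ioo T (2*T), s ∈ Set.Icc (0:ℝ) (2*T) := by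
    intro s hs; exact ⟨by cases hs; linarith, hs.2.le⟩
  have hIoo : ∀ x ∈ Set.Ioo a b, x ∈ Set.Icc a b := fun x hx => ⟨hx.1.le, hx.2.le⟩
  have hTmem : T ∈ Set.Icc (0:ℝ) (2*T) := ⟨hT.le, by linarith⟩
  -- initial-data facts
  have init1 : ∀ x ∈ Set.Ioo a b,
      dt u₀ 0 x = 0 ∧ dt ud 0 x = 0 ∧ dx u₀ 0 x = 0 ∧ dx ud 0 x = 0 := by
    intro x hx
    have hxnb : Set.Ioo a b ∈ nhds x := Ioo_mem_nhds hx.1 hx.2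
    refine ⟨(hu₀0 x (hIoo x hx)).2, (hud0 x (hIoo x hx)).2, ?_, ?_⟩
    · refine deriv_zero_of_eventually (hasDerivAt_slice_x hu₀ 0 x) ?_
      filter_upwards [hxnb] with y hy
      exact (hu₀0 y (hIoo y hy)).1
    · refine deriv_zero_of_eventually (hasDerivAt_slice_x hud 0 x) ?_
      filter_upwards [hxnb] with y hy
      exact (hud0 y (hIoo y hy)).1
  -- time-differentiated PDE facts at interior times
  have hdtv₀pde : ∀ s ∈ Set.Ioo T (2*T), ∀ x ∈ Set.Ioo a b,
      (ρ₀ x : ℂ) * dt (fun t x => dtt v₀ t x) s x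
        = dx (fun t x => dxdt v₀ t x) s x - (σ₀ x : ℂ) * dtt v₀ s x := by
    intro s hs x hx
    have hsnb : Set.Ioo (0:ℝ) (2*T) ∈ nhds s := Ioo_mem_nhds (by cases hs; linarith) hs.2
    have hP1 : HasDerivAt (fun τ => dtt v₀ τ x) (dt (fun t x => dtt v₀ t x) s x) s :=
      hasDerivAt_slice_t (contDiff_dt (contDiff_dt hv₀)) s x
    have hP2 : HasDerivAt (fun τ => dt v₀ τ x) (dtt v₀ s x) s :=
      hasDerivAt_slice_t (contDiff_dt hv₀) s x
    have hxy : dxdt (fun t x => dx v₀ t x) s x = dx (fun t x => dxdt v₀ t x) s x := by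
      show deriv (fun y => dt (fun t x => dx v₀ t x) s y) x = deriv (fun y => dxdt v₀ s y) x
      congr 1
      funext y
      exact (hasDerivAt_dx_t hv₀ s y).deriv
    have hP3 : HasDerivAt (fun τ => dxx v₀ τ x) (dx (fun t x => dxdt v₀ t x) s x) s := by
      have h3 := hasDerivAt_dx_t (contDiff_dx hv₀) s x
      rw [hxy] at h3
      exact h3
    have hVal := ((hP1.const_mul ((ρ₀ x : ℂ))).add (hP2.const_mul ((σ₀ x : ℂ)))).sub hP3
    have hzero : (fun τ => (ρ₀ x : ℂ) * dtt v₀ τ x + (σ₀ x : ℂ) * dt v₀ τ x - dxx v₀ τ x)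
        =ᶠ[nhds s] fun _ => (0:ℂ) := by
      filter_upwards [hsnb] with τ hτ
      exact hv₀eq τ ⟨hτ.1.le, hτ.2.le⟩ x (hIoo x hx)
    have := deriv_zero_of_eventually hVal hzero
    linear_combination this
  have hdtvdpde : ∀ s ∈ Set.Ioo T (2*T), ∀ x ∈ Set.Ioo a b,
      (ρ₀ x : ℂ) * dt (fun t x => dtt vd t x) s x
        = dx (fun t x => dxdt vd t x) s x - (σ₀ x : ℂ) * dtt vd s x
          - (σd x : ℂ) * dtt v₀ s x := by
    intro s hs x hx
    have hsnb : Set.Ioo (0:ℝ) (2*T) ∈ nhds s := Ioo_mem_nhds (by cases hs; linarith) hs.2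
    have hP1 : HasDerivAt (fun τ => dtt vd τ x) (dt (fun t x => dtt vd t x) s x) s :=
      hasDerivAt_slice_t (contDiff_dt (contDiff_dt hvd)) s x
    have hP2 : HasDerivAt (fun τ => dt vd τ x) (dtt vd s x) s :=
      hasDerivAt_slice_t (contDiff_dt hvd) s x
    have hP2' : HasDerivAt (fun τ => dt v₀ τ x) (dtt v₀ s x) s :=
      hasDerivAt_slice_t (contDiff_dt hv₀) s x
    have hxy : dxdt (fun t x => dx vd t x) s x = dx (fun t x => dxdt vd t x) s x := by
      show deriv (fun y => dt (fun t x => dx vd t x) s y) x = deriv (fun y => dxdt vd s y) x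
      congr 1
      funext y
      exact (hasDerivAt_dx_t hvd s y).deriv
    have hP3 : HasDerivAt (fun τ => dxx vd τ x) (dx (fun t x => dxdt vd t x) s x) s := by
      have h3 := hasDerivAt_dx_t (contDiff_dx hvd) s x
      rw [hxy] at h3
      exact h3
    have hVal := (((hP1.const_mul ((ρ₀ x : ℂ))).add (hP2.const_mul ((σ₀ x : ℂ)))).sub hP3).add
      (hP2'.const_mul ((σd x : ℂ)))
    have hzero : (fun τ => (ρ₀ x : ℂ) * dtt vd τ x + (σ₀ x : ℂ) * dt vd τ x - dxx vd τ x
        + (σd x : ℂ) * dt v₀ τ x) =ᶠ[nhds s] fun _ => (0:ℂ) := by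
      filter_upwards [hsnb] with τ hτ
      have := hvdeq τ ⟨hτ.1.le, hτ.2.le⟩ x (hIoo x hx)
      linear_combination this
    have := deriv_zero_of_eventually hVal hzero
    linear_combination this
  -- Neumann conditions for the time derivative of vd at interior times
  have hvdN2 : ∀ s ∈ Set.Ioo T (2*T), dxdt vd s a = 0 ∧ dxdt vd s b = 0 := by
    intro s hs
    have hsnb : Set.Ioo (0:ℝ) (2*T) ∈ nhds s := Ioo_mem_nhds (by cases hs; linarith) hs.2
    constructor
    · refine deriv_zero_of_eventually (hasDerivAt_dx_t hvd s a) ?_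
      filter_upwards [hsnb] with τ hτ
      exact (hvdN τ ⟨hτ.1.le, hτ.2.le⟩).1
    · refine deriv_zero_of_eventually (hasDerivAt_dx_t hvd s b) ?_
      filter_upwards [hsnb] with τ hτ
      exact (hvdN τ ⟨hτ.1.le, hτ.2.le⟩).2
  -- first application of the characteristic identity
  have main1 := blago_main a b T hab hT ρ₀ σ₀ σd hρ₀
    (fun t x => dt u₀ t x) (fun t x => dx u₀ t x)
    (fun t x => dt ud t x) (fun t x => dx ud t x)
    (fun t x => dt v₀ t x) (fun t x => dx v₀ t x)
    (fun t x => dt vd t x) (fun t x => dx vd t x)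
    (contDiff_dt hu₀) (contDiff_dx hu₀) (contDiff_dt hud) (contDiff_dx hud)
    (contDiff_dt hv₀) (contDiff_dx hv₀) (contDiff_dt hvd) (contDiff_dx hvd)
    (fun t x => (hasDerivAt_dx_t hu₀ t x).deriv)
    (fun t x => (hasDerivAt_dx_t hud t x).deriv)
    (fun t x => (hasDerivAt_dx_t hv₀ t x).deriv)
    (fun t x => (hasDerivAt_dx_t hvd t x).deriv)
    (fun t ht x hx => by
      have := hu₀eq t (hIooT t ht) x (hIoo x hx)
      show (ρ₀ x : ℂ) * dtt u₀ t x = dxx u₀ t x - (σ₀ x : ℂ) * dt u₀ t x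
      linear_combination this)
    (fun t ht x hx => by
      have := hudeq t (hIooT t ht) x (hIoo x hx)
      show (ρ₀ x : ℂ) * dtt ud t x = dxx ud t x - (σ₀ x : ℂ) * dt ud t x
        - (σd x : ℂ) * dt u₀ t x
      linear_combination this)
    (fun s hs x hx => by
      have := hv₀eq s (hIooS s hs) x (hIoo x hx)
      show (ρ₀ x : ℂ) * dtt v₀ s x = dxx v₀ s x - (σ₀ x : ℂ) * dt v₀ s x
      linear_combination this)
    (fun s hs x hx => by
      have := hvdeq s (hIooS s hs) x (hIoo x hx)
      show (ρ₀ x : ℂ) * dtt vd s x = dxx vd s x - (σ₀ x : ℂ) * dt vd s x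
        - (σd x : ℂ) * dt v₀ s x
      linear_combination this)
    (fun t ht => hudN t (hIooT t ht))
    (fun s hs => hvdN s (hIooS s hs))
    (fun x hx => ⟨(init1 x hx).1, (init1 x hx).2.1, (init1 x hx).2.2.1, (init1 x hx).2.2.2⟩)
  -- second application, with the v-slot replaced by its time derivative
  have main2 := blago_main a b T hab hT ρ₀ σ₀ σd hρ₀
    (fun t x => dt u₀ t x) (fun t x => dx u₀ t x)
    (fun t x => dt ud t x) (fun t x => dx ud t x)
    (fun t x => dtt v₀ t x) (fun t x => dxdt v₀ t x)
    (fun t x => dtt vd t x) (fun t x => dxdt vd t x)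
    (contDiff_dt hu₀) (contDiff_dx hu₀) (contDiff_dt hud) (contDiff_dx hud)
    (contDiff_dt (contDiff_dt hv₀)) (contDiff_dx (contDiff_dt hv₀))
    (contDiff_dt (contDiff_dt hvd)) (contDiff_dx (contDiff_dt hvd))
    (fun t x => (hasDerivAt_dx_t hu₀ t x).deriv)
    (fun t x => (hasDerivAt_dx_t hud t x).deriv)
    (fun t x => (hasDerivAt_dx_t (contDiff_dt hv₀) t x).deriv)
    (fun t x => (hasDerivAt_dx_t (contDiff_dt hvd) t x).deriv)
    (fun t ht x hx => by
      have := hu₀eq t (hIooT t ht) x (hIoo x hx)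
      show (ρ₀ x : ℂ) * dtt u₀ t x = dxx u₀ t x - (σ₀ x : ℂ) * dt u₀ t x
      linear_combination this)
    (fun t ht x hx => by
      have := hudeq t (hIooT t ht) x (hIoo x hx)
      show (ρ₀ x : ℂ) * dtt ud t x = dxx ud t x - (σ₀ x : ℂ) * dt ud t x
        - (σd x : ℂ) * dt u₀ t x
      linear_combination this)
    (fun s hs x hx => hdtv₀pde s hs x hx)
    (fun s hs x hx => hdtvdpde s hs x hx)
    (fun t ht => hudN t (hIooT t ht))
    (fun s hs => hvdN2 s hs)
    (fun x hx => ⟨(init1 x hx).1, (init1 x hx).2.1, (init1 x hx).2.2.1, (init1 x hx).2.2.2⟩)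
  -- continuity shorthands
  have csl : ∀ {W : ℝ → ℝ → ℂ}, ContDiff ℝ (⊤ : ℕ∞) (fun p : ℝ × ℝ => W p.1 p.2) →
      Continuous (fun x : ℝ => W T x) := fun hW => continuous_slice_x hW.continuous T
  have cst : ∀ {W : ℝ → ℝ → ℂ}, ContDiff ℝ (⊤ : ℕ∞) (fun p : ℝ × ℝ => W p.1 p.2) → ∀ x₀ : ℝ,
      Continuous (fun t : ℝ => W t x₀) := fun hW x₀ => continuous_slice_t hW.continuous x₀
  have ctt : ∀ {W : ℝ → ℝ → ℂ}, ContDiff ℝ (⊤ : ℕ∞) (fun p : ℝ × ℝ => W p.1 p.2) → ∀ x₀ : ℝ,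
      Continuous (fun t : ℝ => W (2*T - t) x₀) := fun hW x₀ =>
    (continuous_slice_t hW.continuous x₀).comp (continuous_const.sub continuous_id)
  have cu1 : Continuous (fun x => dt u₀ T x) := csl (contDiff_dt hu₀)
  have cp1 : Continuous (fun x => dt ud T x) := csl (contDiff_dt hud)
  have cv1 : Continuous (fun x => dt v₀ T x) := csl (contDiff_dt hv₀)
  have cq1 : Continuous (fun x => dt vd T x) := csl (contDiff_dt hvd)
  have cxu : Continuous (fun x => dx u₀ T x) := csl (contDiff_dx hu₀)
  have cxud : Continuous (fun x => dx ud T x) := csl (contDiff_dx hud)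
  have cxv : Continuous (fun x => dx v₀ T x) := csl (contDiff_dx hv₀)
  have cxvd : Continuous (fun x => dx vd T x) := csl (contDiff_dx hvd)
  have cttv : Continuous (fun x => dtt v₀ T x) := csl (contDiff_dt (contDiff_dt hv₀))
  have cttvd : Continuous (fun x => dtt vd T x) := csl (contDiff_dt (contDiff_dt hvd))
  have cxtv : Continuous (fun x => dxdt v₀ T x) := csl (contDiff_dx (contDiff_dt hv₀))
  have cxtvd : Continuous (fun x => dxdt vd T x) := csl (contDiff_dx (contDiff_dt hvd))
  have cxxu : Continuous (fun x => dxx u₀ T x) := csl (contDiff_dx (contDiff_dx hu₀))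
  have cxxvd : Continuous (fun x => dxx vd T x) := csl (contDiff_dx (contDiff_dx hvd))
  have hρC : ContinuousOn (fun x => ((ρ₀ x : ℝ) : ℂ)) (Set.Icc a b) :=
    Complex.continuous_ofReal.comp_continuousOn hρ₀
  have hσC : ContinuousOn (fun x => ((σ₀ x : ℝ) : ℂ)) (Set.Icc a b) :=
    Complex.continuous_ofReal.comp_continuousOn hσ₀
  have hσdC : ContinuousOn (fun x => ((σd x : ℝ) : ℂ)) (Set.Icc a b) :=
    Complex.continuous_ofReal.comp_continuousOn hσd
  have iiw : ∀ {w : ℝ → ℂ}, ContinuousOn w (Set.Icc a b) → ∀ {g : ℝ → ℂ}, Continuous g →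
      IntervalIntegrable (fun x => w x * g x) MeasureTheory.volume a b := by
    intro w hw g hg
    apply ContinuousOn.intervalIntegrable
    rw [Set.uIcc_of_le hab.le]
    exact hw.mul hg.continuousOn
  -- eigenstate facts at time T
  have e1 : ∀ x ∈ Set.Icc a b, dtt v₀ T x = -lam * dt v₀ T x := by
    intro x hx
    have h1 := hv₀eq T hTmem x hx
    have h2 := (hv₀fin x hx).1
    have hρne : ((ρ₀ x : ℝ) : ℂ) ≠ 0 :=
      Complex.ofReal_ne_zero.mpr (ne_of_gt (hρ₀pos x hx))
    apply mul_left_cancel₀ hρne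
    linear_combination h1 + h2
  have e2 : ∀ x ∈ Set.Icc a b, dxdt v₀ T x = -lam * dx v₀ T x := by
    intro x hx
    linear_combination (hv₀fin x hx).2
  -- elementary integral splits at time T
  have splitJ1 : (∫ x in a..b, (ρ₀ x : ℂ) * (dt u₀ T x * dtt vd T x + dt ud T x * dtt v₀ T x))
      = (∫ x in a..b, (ρ₀ x : ℂ) * (dt u₀ T x * dtt vd T x))
        + ∫ x in a..b, (ρ₀ x : ℂ) * (dt ud T x * dtt v₀ T x) := by
    rw [← intervalIntegral.integral_add (iiw hρC (cu1.fun_mul cttvd)) (iiw hρC (cp1.fun_mul cttv))]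
    apply intervalIntegral.integral_congr
    intro x _
    ring
  have splitJ2 : (∫ x in a..b, (dx u₀ T x * dxdt vd T x + dx ud T x * dxdt v₀ T x))
      = (∫ x in a..b, dx u₀ T x * dxdt vd T x) + ∫ x in a..b, dx ud T x * dxdt v₀ T x :=
    intervalIntegral.integral_add ((cxu.mul cxtvd).intervalIntegrable a b)
      ((cxud.mul cxtv).intervalIntegrable a b)
  have splitK1 : (∫ x in a..b, (ρ₀ x : ℂ) * (dt u₀ T x * dt vd T x + dt ud T x * dt v₀ T x))
      = (∫ x in a..b, (ρ₀ x : ℂ) * (dt u₀ T x * dt vd T x))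
        + ∫ x in a..b, (ρ₀ x : ℂ) * (dt ud T x * dt v₀ T x) := by
    rw [← intervalIntegral.integral_add (iiw hρC (cu1.fun_mul cq1)) (iiw hρC (cp1.fun_mul cv1))]
    apply intervalIntegral.integral_congr
    intro x _
    ring
  have splitK2 : (∫ x in a..b, (dx u₀ T x * dx vd T x + dx ud T x * dx v₀ T x))
      = (∫ x in a..b, dx u₀ T x * dx vd T x) + ∫ x in a..b, dx ud T x * dx v₀ T x :=
    intervalIntegral.integral_add ((cxu.mul cxvd).intervalIntegrable a b)
      ((cxud.mul cxv).intervalIntegrable a b)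
  -- eigenstate rewrites of the perturbed-slot integrals
  have r2 : (∫ x in a..b, (ρ₀ x : ℂ) * (dt ud T x * dtt v₀ T x))
      = -lam * ∫ x in a..b, (ρ₀ x : ℂ) * (dt ud T x * dt v₀ T x) := by
    rw [← intervalIntegral.integral_const_mul]
    apply integral_congr_Ioo hab.le
    intro x hx
    rw [e1 x (hIoo x hx)]
    ring
  have r4 : (∫ x in a..b, dx ud T x * dxdt v₀ T x)
      = -lam * ∫ x in a..b, dx ud T x * dx v₀ T x := by
    rw [← intervalIntegral.integral_const_mul]
    apply integral_congr_Ioo hab.le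
    intro x hx
    rw [e2 x (hIoo x hx)]
    ring
  -- PDE substitution for the first integral
  have r1 : (∫ x in a..b, (ρ₀ x : ℂ) * (dt u₀ T x * dtt vd T x))
      = (∫ x in a..b, dt u₀ T x * dxx vd T x)
        - (∫ x in a..b, (σ₀ x : ℂ) * (dt u₀ T x * dt vd T x))
        - ∫ x in a..b, (σd x : ℂ) * (dt u₀ T x * dt v₀ T x) := by
    rw [← intervalIntegral.integral_sub ((cu1.fun_mul cxxvd).intervalIntegrable a b)
      (iiw hσC (cu1.fun_mul cq1)),
      ← intervalIntegral.integral_sub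
        (((cu1.fun_mul cxxvd).intervalIntegrable a b).sub (iiw hσC (cu1.fun_mul cq1)))
        (iiw hσdC (cu1.fun_mul cv1))]
    apply integral_congr_Ioo hab.le
    intro x hx
    linear_combination (dt u₀ T x) * (hvdeq T hTmem x (hIoo x hx))
  -- integration by parts at time T
  have r5 : (∫ x in a..b, dt u₀ T x * dxx vd T x)
      = -∫ x in a..b, dxdt u₀ T x * dx vd T x := by
    have hbd := hvdN T hTmem
    have hibp := my_ibp' (a := a) (b := b)
      (fun x => dt u₀ T x) (fun x => dx vd T x)
      (fun x => dxdt u₀ T x) (fun x => dxx vd T x)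
      (fun x => hasDerivAt_slice_x (contDiff_dt hu₀) T x)
      (fun x => hasDerivAt_slice_x (contDiff_dx hvd) T x)
      (by exact csl (contDiff_dx (contDiff_dt hu₀))) cxxvd
    simp only [hbd.1, hbd.2, mul_zero, sub_zero, zero_sub, zero_mul] at hibp
    rw [hibp]
  have ibpa : (∫ x in a..b, dx u₀ T x * dxdt vd T x)
      = (dx u₀ T b * dt vd T b - dx u₀ T a * dt vd T a)
        - ∫ x in a..b, dxx u₀ T x * dt vd T x := by
    have hibp := my_ibp' (a := a) (b := b)
      (fun x => dx u₀ T x) (fun x => dt vd T x)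
      (fun x => dxx u₀ T x) (fun x => dxdt vd T x)
      (fun x => hasDerivAt_slice_x (contDiff_dx hu₀) T x)
      (fun x => hasDerivAt_slice_x (contDiff_dt hvd) T x)
      cxxu (by exact csl (contDiff_dx (contDiff_dt hvd)))
    exact hibp
  -- the final pointwise cancellation
  have r7 : (∫ x in a..b, dxx u₀ T x * dt vd T x)
      - (∫ x in a..b, dxdt u₀ T x * dx vd T x)
      - (∫ x in a..b, (σ₀ x : ℂ) * (dt u₀ T x * dt vd T x))
      + lam * (∫ x in a..b, (ρ₀ x : ℂ) * (dt u₀ T x * dt vd T x))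
      - lam * (∫ x in a..b, dx u₀ T x * dx vd T x) = 0 := by
    have i1 := (cxxu.fun_mul cq1).intervalIntegrable (μ := MeasureTheory.volume) a b
    have i2 : IntervalIntegrable (fun x => dxdt u₀ T x * dx vd T x)
        MeasureTheory.volume a b :=
      ((csl (contDiff_dx (contDiff_dt hu₀))).mul cxvd).intervalIntegrable a b
    have i3 := iiw hσC (cu1.fun_mul cq1)
    have i4 := iiw hρC (cu1.fun_mul cq1)
    have i5 := (cxu.fun_mul cxvd).intervalIntegrable (μ := MeasureTheory.volume) a b
    rw [← intervalIntegral.integral_const_mul, ← intervalIntegral.integral_const_mul,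
      ← intervalIntegral.integral_sub i1 i2,
      ← intervalIntegral.integral_sub (i1.sub i2) i3,
      ← intervalIntegral.integral_add ((i1.sub i2).sub i3) (i4.const_mul lam),
      ← intervalIntegral.integral_sub (((i1.sub i2).sub i3).add (i4.const_mul lam))
        (i5.const_mul lam)]
    have hzero : (∫ x in a..b, (0:ℂ)) = 0 := intervalIntegral.integral_zero
    rw [← hzero]
    apply integral_congr_Ioo hab.le
    intro x hx
    have h1 := (hu₀fin x (hIoo x hx)).1
    have h2 := (hu₀fin x (hIoo x hx)).2
    linear_combination (dt vd T x) * h1 - (dx vd T x) * h2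
  -- association of the source integral
  have hS : (∫ x in a..b, (σd x : ℂ) * (dt u₀ T x * dt v₀ T x))
      = ∫ x in a..b, (σd x : ℂ) * dt u₀ T x * dt v₀ T x := by
    apply intervalIntegral.integral_congr
    intro x _
    ring
  -- assembled time-T identity
  have hJ : ((∫ x in a..b, (ρ₀ x : ℂ) * (dt u₀ T x * dtt vd T x + dt ud T x * dtt v₀ T x))
        - ∫ x in a..b, (dx u₀ T x * dxdt vd T x + dx ud T x * dxdt v₀ T x))
      + lam * ((∫ x in a..b, (ρ₀ x : ℂ) * (dt u₀ T x * dt vd T x + dt ud T x * dt v₀ T x))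
        - ∫ x in a..b, (dx u₀ T x * dx vd T x + dx ud T x * dx v₀ T x))
      + (∫ x in a..b, (σd x : ℂ) * (dt u₀ T x * dt v₀ T x))
      + (dx u₀ T b * dt vd T b - dx u₀ T a * dt vd T a) = 0 := by
    linear_combination splitJ1 - splitJ2 + lam * splitK1 - lam * splitK2
      + r1 + r2 - r4 + r5 - ibpa + r7
  -- characteristic-integral splits
  have hM1split : (∫ t in (0:ℝ)..T,
        ((dx u₀ t b * dt vd (2*T - t) b - dx u₀ t a * dt vd (2*T - t) a)
          - (dt ud t b * dx v₀ (2*T - t) b - dt ud t a * dx v₀ (2*T - t) a)))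
      = (∫ t in (0:ℝ)..T,
          (dx u₀ t b * dt vd (2*T - t) b - dx u₀ t a * dt vd (2*T - t) a))
        - ∫ t in (0:ℝ)..T,
          (dt ud t b * dx v₀ (2*T - t) b - dt ud t a * dx v₀ (2*T - t) a) :=
    intervalIntegral.integral_sub
      ((((cst (contDiff_dx hu₀) b).mul (ctt (contDiff_dt hvd) b)).sub
        ((cst (contDiff_dx hu₀) a).mul (ctt (contDiff_dt hvd) a))).intervalIntegrable 0 T)
      ((((cst (contDiff_dt hud) b).mul (ctt (contDiff_dx hv₀) b)).sub
        ((cst (contDiff_dt hud) a).mul (ctt (contDiff_dx hv₀) a))).intervalIntegrable 0 T)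
  have hM2split : (∫ t in (0:ℝ)..T,
        ((dx u₀ t b * dtt vd (2*T - t) b - dx u₀ t a * dtt vd (2*T - t) a)
          - (dt ud t b * dxdt v₀ (2*T - t) b - dt ud t a * dxdt v₀ (2*T - t) a)))
      = (∫ t in (0:ℝ)..T,
          (dx u₀ t b * dtt vd (2*T - t) b - dx u₀ t a * dtt vd (2*T - t) a))
        - ∫ t in (0:ℝ)..T,
          (dt ud t b * dxdt v₀ (2*T - t) b - dt ud t a * dxdt v₀ (2*T - t) a) :=
    intervalIntegral.integral_sub
      ((((cst (contDiff_dx hu₀) b).mul (ctt (contDiff_dt (contDiff_dt hvd)) b)).sub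
        ((cst (contDiff_dx hu₀) a).mul
          (ctt (contDiff_dt (contDiff_dt hvd)) a))).intervalIntegrable 0 T)
      ((((cst (contDiff_dt hud) b).mul (ctt (contDiff_dx (contDiff_dt hv₀)) b)).sub
        ((cst (contDiff_dt hud) a).mul
          (ctt (contDiff_dx (contDiff_dt hv₀)) a))).intervalIntegrable 0 T)
  have main1' : ((∫ x in a..b, (ρ₀ x : ℂ) * (dt u₀ T x * dt vd T x + dt ud T x * dt v₀ T x))
        - ∫ x in a..b, (dx u₀ T x * dx vd T x + dx ud T x * dx v₀ T x))
      = (∫ t in (0:ℝ)..T,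
          (dx u₀ t b * dt vd (2*T - t) b - dx u₀ t a * dt vd (2*T - t) a))
        - ∫ t in (0:ℝ)..T,
          (dt ud t b * dx v₀ (2*T - t) b - dt ud t a * dx v₀ (2*T - t) a) :=
    main1.trans hM1split
  have main2' : ((∫ x in a..b, (ρ₀ x : ℂ) * (dt u₀ T x * dtt vd T x + dt ud T x * dtt v₀ T x))
        - ∫ x in a..b, (dx u₀ T x * dxdt vd T x + dx ud T x * dxdt v₀ T x))
      = (∫ t in (0:ℝ)..T,
          (dx u₀ t b * dtt vd (2*T - t) b - dx u₀ t a * dtt vd (2*T - t) a))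
        - ∫ t in (0:ℝ)..T,
          (dt ud t b * dxdt v₀ (2*T - t) b - dt ud t a * dxdt v₀ (2*T - t) a) :=
    main2.trans hM2split
  -- rewrite the boundary traces in the statement
  have hI1 : (∫ t in (0:ℝ)..T,
        (f t a * dtt vd (2*T - t) a + f t b * dtt vd (2*T - t) b))
      = ∫ t in (0:ℝ)..T,
          (dx u₀ t b * dtt vd (2*T - t) b - dx u₀ t a * dtt vd (2*T - t) a) := by
    apply intervalIntegral.integral_congr
    intro t _
    simp only [hfa, hfb]
    ring
  have hderiva : ∀ σ' : ℝ, deriv (fun s => h s a) σ' = -dxdt v₀ σ' a := by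
    intro σ'
    have h1 : (fun s => h s a) = fun s => -dx v₀ s a := funext hha
    rw [h1]
    exact ((hasDerivAt_dx_t hv₀ σ' a).neg).deriv
  have hderivb : ∀ σ' : ℝ, deriv (fun s => h s b) σ' = dxdt v₀ σ' b := by
    intro σ'
    have h1 : (fun s => h s b) = fun s => dx v₀ s b := funext hhb
    rw [h1]
    exact (hasDerivAt_dx_t hv₀ σ' b).deriv
  have hI2 : (∫ t in (0:ℝ)..T,
        (dt ud t a * deriv (fun s => h s a) (2*T - t)
          + dt ud t b * deriv (fun s => h s b) (2*T - t)))
      = ∫ t in (0:ℝ)..T,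
          (dt ud t b * dxdt v₀ (2*T - t) b - dt ud t a * dxdt v₀ (2*T - t) a) := by
    apply intervalIntegral.integral_congr
    intro t _
    simp only [hderiva, hderivb]
    ring
  have hI3 : (∫ t in (0:ℝ)..T,
        (f t a * dt vd (2*T - t) a + f t b * dt vd (2*T - t) b))
      = ∫ t in (0:ℝ)..T,
          (dx u₀ t b * dt vd (2*T - t) b - dx u₀ t a * dt vd (2*T - t) a) := by
    apply intervalIntegral.integral_congr
    intro t _
    simp only [hfa, hfb]
    ring
  have hI4 : (∫ t in (0:ℝ)..T,
        (dt ud t a * h (2*T - t) a + dt ud t b * h (2*T - t) b))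
      = ∫ t in (0:ℝ)..T,
          (dt ud t b * dx v₀ (2*T - t) b - dt ud t a * dx v₀ (2*T - t) a) := by
    apply intervalIntegral.integral_congr
    intro t _
    simp only [hha, hhb]
    ring
  rw [hI1, hI2, hI3, hI4, hfa T, hfb T]
  linear_combination hJ - hS - main2' - lam * main1'
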